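/- Let A be a nonnegative real square matrix indexed by Σ i : Fin k, Fin (s i) (with s i ≥ 1 for all i, square diagonal blocks) and B a nonnegative real square matrix indexed by Σ i : Fin l, Fin (t i) (with t i ≥ 1 for all i, square diagonal blocks), where k and l may differ. Let A↑ be the k×k matrix of maximum block row sums of A and B↓ the l×l matrix of minimum block row sums of B. If ρ(A↑) ≤ ρ(B↓), then ρ(A) ≤ ρ(B). -/

import Mathlib

open Matrix

/-- Spectral radius of a real square matrix: the maximum of the moduli of its
complex eigenvalues (elements of the spectrum of the matrix over `ℂ`). -/
noncomputable def specRad {n : Type*} [Fintype n] [DecidableEq n]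
    (M : Matrix n n ℝ) : ℝ :=
  sSup ((fun z : ℂ => ‖z‖) '' spectrum ℂ (M.map (algebraMap ℝ ℂ)))

/-!
The chain is `ρ(A) ≤ ρ(A↑) ≤ ρ(B↓) ≤ ρ(B)`. Both outer links come from subinvariance: if
`M ≥ 0` and `c • z ≤ M z` for a nonzero `z ≥ 0`, then `c^k • z ≤ M^k z`, so `‖M^k‖` grows at
least like `c^k` and Gelfand's formula gives `c ≤ ρ(M)`. For an eigenpair `(μ, x)` of `A`, the
blockwise maxima of `|x|` form such a `z` for `A↑` with `c = |μ|`; for an eigenpair `(μ, w)` of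
`B↓`, the vector `|w|` spread constantly over the blocks is such a `z` for `B`.
-/

open Filter Finset Topology

theorem ofReal_le_spectralRadius_of_pow_mul_le_norm_pow {A : Type*} [NormedRing A]
    [NormedAlgebra ℂ A] [CompleteSpace A] {a : A} {c q : ℝ} (hc : 0 ≤ c) (hq : 0 < q)
    (h : ∀ m : ℕ, c ^ m * q ≤ ‖a ^ m‖) : ENNReal.ofReal c ≤ spectralRadius ℂ a := by
  have hlim : Tendsto (fun m : ℕ => ENNReal.ofReal (c * q ^ (1 / m : ℝ))) atTop
      (𝓝 (ENNReal.ofReal c)) := by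
    refine ENNReal.tendsto_ofReal ?_
    simpa using tendsto_const_nhds.mul
      (tendsto_const_nhds.rpow tendsto_one_div_atTop_nhds_zero_nat (Or.inl hq.ne'))
  refine le_of_tendsto_of_tendsto hlim
    (spectrum.pow_norm_pow_one_div_tendsto_nhds_spectralRadius a) ?_
  filter_upwards [eventually_ne_atTop 0] with m hm
  refine ENNReal.ofReal_le_ofReal ?_
  calc c * q ^ (1 / m : ℝ) = (c ^ m * q) ^ (1 / m : ℝ) := by
        rw [Real.mul_rpow (by positivity) hq.le, one_div, Real.pow_rpow_inv_natCast hc hm]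
    _ ≤ ‖a ^ m‖ ^ (1 / m : ℝ) := by gcongr; exact h m

namespace Matrix

variable {m n : Type*} [Fintype n]

theorem exists_mulVec_eq_smul_of_mem_spectrum [DecidableEq n] {K : Type*} [Field K]
    {a : Matrix n n K} {μ : K} (h : μ ∈ spectrum K a) : ∃ x : n → K, x ≠ 0 ∧ a *ᵥ x = μ • x := by
  rw [← spectrum_toLin', ← Module.End.hasEigenvalue_iff_mem_spectrum] at h
  obtain ⟨x, hx⟩ := h.exists_hasEigenvector
  exact ⟨x, hx.2, by simpa using hx.apply_eq_smul⟩

section Order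

variable {R : Type*} [CommSemiring R] [PartialOrder R] [IsOrderedRing R]

theorem mulVec_mono {M : Matrix m n R} (hM : ∀ p q, 0 ≤ M p q) : Monotone (M *ᵥ ·) :=
  fun _ _ huv p => dotProduct_le_dotProduct_of_nonneg_left huv (hM p)

theorem pow_smul_le_pow_mulVec [DecidableEq n] {M : Matrix n n R} (hM : ∀ p q, 0 ≤ M p q)
    {c : R} (hc : 0 ≤ c) {z : n → R} (hMz : c • z ≤ M *ᵥ z) (k : ℕ) :
    c ^ k • z ≤ (M ^ k) *ᵥ z := by
  induction k with
  | zero => simp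
  | succ k ih =>
    calc c ^ (k + 1) • z = c ^ k • c • z := by rw [pow_succ, mul_smul]
      _ ≤ c ^ k • (M *ᵥ z) := smul_le_smul_of_nonneg_left hMz (pow_nonneg hc k)
      _ = M *ᵥ (c ^ k • z) := (mulVec_smul ..).symm
      _ ≤ M *ᵥ ((M ^ k) *ᵥ z) := mulVec_mono hM ih
      _ = (M ^ (k + 1)) *ᵥ z := by rw [mulVec_mulVec, pow_succ']

end Order

theorem norm_smul_norm_le_mulVec_norm {M : Matrix n n ℝ} (hM : ∀ p q, 0 ≤ M p q) {μ : ℂ}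
    {x : n → ℂ} (hx : M.map (algebraMap ℝ ℂ) *ᵥ x = μ • x) :
    ‖μ‖ • (fun p => ‖x p‖) ≤ M *ᵥ fun p => ‖x p‖ := by
  intro p
  calc ‖μ‖ * ‖x p‖ = ‖(M.map (algebraMap ℝ ℂ) *ᵥ x) p‖ := by
        rw [hx, Pi.smul_apply, smul_eq_mul, norm_mul]
    _ ≤ ∑ q, ‖(M p q : ℂ) * x q‖ := norm_sum_le _ _
    _ = (M *ᵥ fun q => ‖x q‖) p := by simp [mulVec, dotProduct, abs_of_nonneg (hM p _)]

attribute [local instance] Matrix.linftyOpNormedAddCommGroup in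
theorem linfty_opNorm_map_eq [Fintype m] {α β : Type*} [NormedAddCommGroup α]
    [NormedAddCommGroup β] (A : Matrix m n α) (f : α → β) (hf : ∀ a, ‖f a‖₊ = ‖a‖₊) :
    ‖A.map f‖ = ‖A‖ := by
  simp only [← coe_nnnorm, linfty_opNNNorm_def, map_apply, hf]

end Matrix

section SpecRad

variable {m n : Type*} [Fintype m] [DecidableEq m] [Fintype n] [DecidableEq n]

theorem specRad_nonneg (M : Matrix n n ℝ) : 0 ≤ specRad M :=
  Real.sSup_nonneg <| by rintro _ ⟨μ, -, rfl⟩; exact norm_nonneg μ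

theorem norm_le_specRad {M : Matrix n n ℝ} {μ : ℂ}
    (hμ : μ ∈ spectrum ℂ (M.map (algebraMap ℝ ℂ))) : ‖μ‖ ≤ specRad M :=
  le_csSup ((finite_spectrum _).image _).bddAbove ⟨μ, hμ, rfl⟩

theorem specRad_le_of_forall_norm_le {M : Matrix n n ℝ} {r : ℝ} (hr : 0 ≤ r)
    (h : ∀ μ ∈ spectrum ℂ (M.map (algebraMap ℝ ℂ)), ‖μ‖ ≤ r) : specRad M ≤ r :=
  Real.sSup_le (by rintro _ ⟨μ, hμ, rfl⟩; exact h μ hμ) hr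

attribute [local instance] Matrix.linftyOpNormedRing Matrix.linftyOpNormedAlgebra in
theorem le_specRad_of_smul_le_mulVec {M : Matrix n n ℝ} (hM : ∀ p q, 0 ≤ M p q) {c : ℝ}
    (hc : 0 ≤ c) {z : n → ℝ} (hz : 0 ≤ z) (hz0 : z ≠ 0) (hMz : c • z ≤ M *ᵥ z) :
    c ≤ specRad M := by
  obtain ⟨p, hp⟩ : ∃ p, 0 < z p := by
    by_contra! h
    exact hz0 (le_antisymm h hz)
  have : Nonempty n := ⟨p⟩
  have hz_norm : 0 < ‖z‖ := norm_pos_iff.mpr hz0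
  have hbound (k : ℕ) : c ^ k * (z p / ‖z‖) ≤ ‖M.map (algebraMap ℝ ℂ) ^ k‖ := by
    rw [← Matrix.map_pow, linfty_opNorm_map_eq _ _ (by simp), ← mul_div_assoc,
      div_le_iff₀ hz_norm]
    calc c ^ k * z p ≤ ((M ^ k) *ᵥ z) p := pow_smul_le_pow_mulVec hM hc hMz k p
      _ ≤ ‖(M ^ k) *ᵥ z‖ := (Real.le_norm_self _).trans (norm_le_pi_norm _ p)
      _ ≤ ‖M ^ k‖ * ‖z‖ := linfty_opNorm_mulVec _ _
  obtain ⟨μ, hμ, hμ_eq⟩ := spectrum.exists_nnnorm_eq_spectralRadius_of_nonempty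
    (spectrum.nonempty (M.map (algebraMap ℝ ℂ)))
  have hc_le := ofReal_le_spectralRadius_of_pow_mul_le_norm_pow hc (div_pos hp hz_norm) hbound
  rw [← hμ_eq, ENNReal.ofReal_le_iff_le_toReal ENNReal.coe_ne_top] at hc_le
  exact hc_le.trans (norm_le_specRad hμ)

theorem specRad_le_specRad_of_forall_eigenpair {N : Matrix m m ℝ} {M : Matrix n n ℝ}
    (hM : ∀ p q, 0 ≤ M p q)
    (h : ∀ (μ : ℂ) (x : m → ℂ), x ≠ 0 → N.map (algebraMap ℝ ℂ) *ᵥ x = μ • x →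
      ∃ z : n → ℝ, 0 ≤ z ∧ z ≠ 0 ∧ ‖μ‖ • z ≤ M *ᵥ z) :
    specRad N ≤ specRad M :=
  specRad_le_of_forall_norm_le (specRad_nonneg M) fun μ hμ => by
    obtain ⟨x, hx0, hx⟩ := exists_mulVec_eq_smul_of_mem_spectrum hμ
    obtain ⟨z, hz, hz0, hMz⟩ := h μ x hx0 hx
    exact le_specRad_of_smul_le_mulVec hM (norm_nonneg μ) hz hz0 hMz

end SpecRad

namespace Matrix

variable {ι : Type*} {β : ι → Type*} [∀ i, Fintype (β i)]

theorem mulVec_comp_fst_apply {m R : Type*} [Fintype ι] [NonUnitalNonAssocSemiring R]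
    (M : Matrix m (Σ i, β i) R) (y : ι → R) (p : m) :
    (M *ᵥ fun q => y q.1) p = ∑ j, (∑ v, M p ⟨j, v⟩) * y j := by
  simp only [mulVec, dotProduct, Fintype.sum_sigma, Finset.sum_mul]

variable [∀ i, Nonempty (β i)] (M : Matrix (Σ i, β i) (Σ i, β i) ℝ)

/- `A↑` and `B↓` of the main theorem are these definitions up to the (irrelevant) proofs of
nonemptiness, so the hypothesis there is literally `ρ(maxBlockRowSum A) ≤ ρ(minBlockRowSum B)`. -/
def maxBlockRowSum : Matrix ι ι ℝ :=
  of fun i j => univ.sup' univ_nonempty fun u => ∑ v, M ⟨i, u⟩ ⟨j, v⟩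

def minBlockRowSum : Matrix ι ι ℝ :=
  of fun i j => univ.inf' univ_nonempty fun u => ∑ v, M ⟨i, u⟩ ⟨j, v⟩

theorem sum_le_maxBlockRowSum (i j : ι) (u : β i) :
    ∑ v, M ⟨i, u⟩ ⟨j, v⟩ ≤ maxBlockRowSum M i j :=
  le_sup' (fun u => ∑ v, M ⟨i, u⟩ ⟨j, v⟩) (mem_univ u)

theorem minBlockRowSum_le_sum (i j : ι) (u : β i) :
    minBlockRowSum M i j ≤ ∑ v, M ⟨i, u⟩ ⟨j, v⟩ :=
  inf'_le (fun u => ∑ v, M ⟨i, u⟩ ⟨j, v⟩) (mem_univ u)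

variable {M}

theorem maxBlockRowSum_nonneg (hM : ∀ p q, 0 ≤ M p q) (i j : ι) : 0 ≤ maxBlockRowSum M i j :=
  (sum_nonneg fun _ _ => hM _ _).trans (sum_le_maxBlockRowSum M i j (Classical.arbitrary _))

theorem minBlockRowSum_nonneg (hM : ∀ p q, 0 ≤ M p q) (i j : ι) : 0 ≤ minBlockRowSum M i j :=
  le_inf' univ_nonempty _ fun _ _ => sum_nonneg fun _ _ => hM _ _

variable [Fintype ι] [DecidableEq ι] [∀ i, DecidableEq (β i)]

theorem specRad_le_specRad_maxBlockRowSum (hM : ∀ p q, 0 ≤ M p q) :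
    specRad M ≤ specRad (maxBlockRowSum M) := by
  refine specRad_le_specRad_of_forall_eigenpair (maxBlockRowSum_nonneg hM)
    fun μ x hx0 hx => ?_
  let z : ι → ℝ := fun i => univ.sup' univ_nonempty fun u => ‖x ⟨i, u⟩‖
  have hxz : (fun q => ‖x q‖) ≤ fun q => z q.1 := fun q =>
    le_sup' (fun u => ‖x ⟨q.1, u⟩‖) (mem_univ q.2)
  have hz : 0 ≤ z := fun i => (norm_nonneg _).trans (hxz ⟨i, Classical.arbitrary _⟩)
  refine ⟨z, hz, ?_, fun i => ?_⟩
  · obtain ⟨q, hq⟩ := Function.ne_iff.mp hx0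
    exact Function.ne_iff.mpr ⟨q.1, ((norm_pos_iff.mpr hq).trans_le (hxz q)).ne'⟩
  · obtain ⟨u, -, hu⟩ := exists_mem_eq_sup' univ_nonempty fun u => ‖x ⟨i, u⟩‖
    calc ‖μ‖ * z i = ‖μ‖ * ‖x ⟨i, u⟩‖ := congrArg _ hu
      _ ≤ (M *ᵥ fun q => ‖x q‖) ⟨i, u⟩ := norm_smul_norm_le_mulVec_norm hM hx ⟨i, u⟩
      _ ≤ (M *ᵥ fun q => z q.1) ⟨i, u⟩ := mulVec_mono hM hxz _
      _ = ∑ j, (∑ v, M ⟨i, u⟩ ⟨j, v⟩) * z j := mulVec_comp_fst_apply ..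
      _ ≤ ∑ j, maxBlockRowSum M i j * z j := by
        gcongr with j
        · exact hz j
        · exact sum_le_maxBlockRowSum M i j u

theorem specRad_minBlockRowSum_le_specRad (hM : ∀ p q, 0 ≤ M p q) :
    specRad (minBlockRowSum M) ≤ specRad M := by
  refine specRad_le_specRad_of_forall_eigenpair hM fun μ w hw0 hw => ?_
  refine ⟨fun q => ‖w q.1‖, fun q => norm_nonneg _, ?_, ?_⟩
  · obtain ⟨i, hi⟩ := Function.ne_iff.mp hw0
    exact Function.ne_iff.mpr ⟨⟨i, Classical.arbitrary _⟩, norm_ne_zero_iff.mpr hi⟩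
  · rintro ⟨i, u⟩
    calc ‖μ‖ * ‖w i‖ ≤ (minBlockRowSum M *ᵥ fun j => ‖w j‖) i :=
          norm_smul_norm_le_mulVec_norm (minBlockRowSum_nonneg hM) hw i
      _ = ∑ j, minBlockRowSum M i j * ‖w j‖ := rfl
      _ ≤ ∑ j, (∑ v, M ⟨i, u⟩ ⟨j, v⟩) * ‖w j‖ := by
        gcongr with j
        exact minBlockRowSum_le_sum M i j u
      _ = (M *ᵥ fun q => ‖w q.1‖) ⟨i, u⟩ := (mulVec_comp_fst_apply ..).symm

end Matrix

theorem specRad_le_of_specRad_contraction_le_general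
    {k l : ℕ}
    (s : Fin k → ℕ) (t : Fin l → ℕ)
    (hs : ∀ i, 1 ≤ s i) (ht : ∀ i, 1 ≤ t i)
    (A : Matrix (Σ i, Fin (s i)) (Σ i, Fin (s i)) ℝ)
    (hA : ∀ p q, 0 ≤ A p q)
    (B : Matrix (Σ i, Fin (t i)) (Σ i, Fin (t i)) ℝ)
    (hB : ∀ p q, 0 ≤ B p q)
    (hle : specRad (Matrix.of fun (i j : Fin k) =>
        Finset.univ.sup'
          (Finset.univ_nonempty_iff.mpr (Fin.pos_iff_nonempty.mp (hs i)))
          (fun u : Fin (s i) => ∑ v : Fin (s j), A ⟨i, u⟩ ⟨j, v⟩)) ≤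
      specRad (Matrix.of fun (i j : Fin l) =>
        Finset.univ.inf'
          (Finset.univ_nonempty_iff.mpr (Fin.pos_iff_nonempty.mp (ht i)))
          (fun u : Fin (t i) => ∑ v : Fin (t j), B ⟨i, u⟩ ⟨j, v⟩))) :
    specRad A ≤ specRad B := by
  have (i : Fin k) : Nonempty (Fin (s i)) := Fin.pos_iff_nonempty.mp (hs i)
  have (i : Fin l) : Nonempty (Fin (t i)) := Fin.pos_iff_nonempty.mp (ht i)
  calc specRad A ≤ specRad (maxBlockRowSum A) := specRad_le_specRad_maxBlockRowSum hA
    _ ≤ specRad (minBlockRowSum B) := hle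
    _ ≤ specRad B := specRad_minBlockRowSum_le_specRad hB

/-- Comparison of spectral radii via block row sum contractions of possibly
different sizes: if the spectral radius of the upward row sum contraction of `A`
is at most that of the downward row sum contraction of `B`, then
`ρ(A) ≤ ρ(B)`. -/
theorem specRad_le_of_specRad_contraction_le
    {k l : ℕ} (hk : 1 ≤ k) (hl : 1 ≤ l)
    (s : Fin k → ℕ) (t : Fin l → ℕ)
    (hs : ∀ i, 1 ≤ s i) (ht : ∀ i, 1 ≤ t i)
    (A : Matrix (Σ i, Fin (s i)) (Σ i, Fin (s i)) ℝ)
    (hA : ∀ p q, 0 ≤ A p q)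
    (B : Matrix (Σ i, Fin (t i)) (Σ i, Fin (t i)) ℝ)
    (hB : ∀ p q, 0 ≤ B p q)
    (hle : specRad (Matrix.of fun (i j : Fin k) =>
        Finset.univ.sup'
          (Finset.univ_nonempty_iff.mpr (Fin.pos_iff_nonempty.mp (hs i)))
          (fun u : Fin (s i) => ∑ v : Fin (s j), A ⟨i, u⟩ ⟨j, v⟩)) ≤
      specRad (Matrix.of fun (i j : Fin l) =>
        Finset.univ.inf'
          (Finset.univ_nonempty_iff.mpr (Fin.pos_iff_nonempty.mp (ht i)))
          (fun u : Fin (t i) => ∑ v : Fin (t j), B ⟨i, u⟩ ⟨j, v⟩))) :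
    specRad A ≤ specRad B :=
  specRad_le_of_specRad_contraction_le_general s t hs ht A hA B hB hle
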